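/- Suppose q on a finite product space satisfies the strengthened approximate tensorization inequality D_KL(p,q) ≤ C Σ_i E_{X_{∼i}∼p}[TV²(p(X_i|X_{∼i}), q(X_i|X_{∼i}))] for all p. Then on the hypercube {±1}^d, D_KL(p,q) ≤ C (M_p(q) − M_p(p)), where M_p is the ratio matching objective M_p(q) = Σ_i E_{X∼p}[(1(X_i=+1) − q(X_i=+1|X_{∼i}))²]. -/

import Mathlib

noncomputable section

/-- Conditional probability `q(X_i = +1 | X_{∼i})` on the hypercube (`true` is `+1`). -/
def condTrue {d : ℕ} (q : (Fin d → Bool) → ℝ) (i : Fin d) (x : Fin d → Bool) : ℝ :=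
  q (Function.update x i true) /
    (q (Function.update x i true) + q (Function.update x i false))

/-- Ratio matching objective `M_p(q) = Σ_i E_{X∼p}[(1(X_i=+1) − q(X_i=+1|X_{∼i}))²]`. -/
def ratioMatch {d : ℕ} (p q : (Fin d → Bool) → ℝ) : ℝ :=
  ∑ i : Fin d, ∑ x : Fin d → Bool,
    p x * ((if x i then (1 : ℝ) else 0) - condTrue q i x) ^ 2

/-- Discrete KL divergence. -/
def KLdiv {d : ℕ} (p q : (Fin d → Bool) → ℝ) : ℝ :=
  ∑ x : Fin d → Bool, p x * Real.log (p x / q x)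

open Function

theorem Fintype.sum_update_true_add_update_false {ι M : Type*} [Fintype ι] [DecidableEq ι]
    [AddCommMonoid M] (G : (ι → Bool) → M) (i : ι) :
    ∑ x, (G (update x i true) + G (update x i false)) = 2 • ∑ x, G x := by
  have hflip : Involutive fun x : ι → Bool => update x i (!x i) := fun x => by
    ext j
    by_cases h : j = i <;> simp [update, h]
  have hpair (x : ι → Bool) :
      G (update x i true) + G (update x i false) = G x + G (update x i (!x i)) := by
    cases hx : x i
    · rw [← hx, update_eq_self, hx, add_comm]; rfl
    · rw [← hx, update_eq_self, hx]; rfl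
  simp only [hpair, Finset.sum_add_distrib, hflip.bijective.sum_comp G, two_nsmul]

lemma condTrue_update {d : ℕ} (q : (Fin d → Bool) → ℝ) (i : Fin d) (x : Fin d → Bool)
    (b : Bool) : condTrue q i (update x i b) = condTrue q i x := by
  simp [condTrue, update_idem]

/-- Pythagoras for the conditional expectation of the indicator of `X_i = +1` given `X_{∼i}`:
`condTrue p i` is the `L²(p)`-projection onto functions that do not depend on `x i`. -/
lemma sum_mul_indicator_sub_sq {d : ℕ} (p : (Fin d → Bool) → ℝ) (i : Fin d)
    (hp : ∀ x, p (update x i true) + p (update x i false) ≠ 0)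
    (c : (Fin d → Bool) → ℝ) (hc : ∀ x b, c (update x i b) = c x) :
    ∑ x, p x * ((if x i then (1 : ℝ) else 0) - c x) ^ 2 =
      ∑ x, p x * ((if x i then (1 : ℝ) else 0) - condTrue p i x) ^ 2 +
        ∑ x, p x * (condTrue p i x - c x) ^ 2 := by
  set cross : (Fin d → Bool) → ℝ := fun x =>
    p x * ((if x i then (1 : ℝ) else 0) - condTrue p i x) * (condTrue p i x - c x)
  have hcross : ∑ x, cross x = 0 := by
    have hpair (x : Fin d → Bool) : cross (update x i true) + cross (update x i false) = 0 := by
      have hcP : condTrue p i x * (p (update x i true) + p (update x i false)) =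
          p (update x i true) := div_mul_cancel₀ _ (hp x)
      simp only [cross, condTrue_update, hc, update_self, if_true, Bool.false_eq_true, if_false]
      linear_combination (c x - condTrue p i x) * hcP
    have := Fintype.sum_update_true_add_update_false cross i
    simp only [hpair, Finset.sum_const_zero] at this
    simpa using this.symm
  have hexpand : ∀ x, p x * ((if x i then (1 : ℝ) else 0) - c x) ^ 2 =
      p x * ((if x i then (1 : ℝ) else 0) - condTrue p i x) ^ 2 +
        p x * (condTrue p i x - c x) ^ 2 + 2 * cross x := fun x => by ring
  simp only [hexpand, Finset.sum_add_distrib, ← Finset.mul_sum, hcross, mul_zero, add_zero]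

lemma ratioMatch_sub_ratioMatch_self {d : ℕ} (p q : (Fin d → Bool) → ℝ)
    (hp : ∀ i x, p (update x i true) + p (update x i false) ≠ 0) :
    ratioMatch p q - ratioMatch p p =
      ∑ i, ∑ x, p x * (condTrue p i x - condTrue q i x) ^ 2 := by
  rw [ratioMatch, ratioMatch, ← Finset.sum_sub_distrib]
  refine Finset.sum_congr rfl fun i _ => ?_
  rw [sum_mul_indicator_sub_sq p i (hp i) _ (condTrue_update q i)]
  ring

theorem strong_at_implies_ratio_matching_bound_general {d : ℕ}
    (q : (Fin d → Bool) → ℝ)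
    (C : ℝ)
    (hAT2 : ∀ p : (Fin d → Bool) → ℝ, (∀ x, 0 ≤ p x) →
      (∑ x : Fin d → Bool, p x = 1) →
      (∀ (i : Fin d) (x : Fin d → Bool),
        0 < p (Function.update x i true) + p (Function.update x i false)) →
      KLdiv p q ≤ C * ∑ i : Fin d, ∑ x : Fin d → Bool,
        p x * (condTrue p i x - condTrue q i x) ^ 2)
    (p : (Fin d → Bool) → ℝ) (hp0 : ∀ x, 0 ≤ p x)
    (hp1 : ∑ x : Fin d → Bool, p x = 1)
    (hpmarg : ∀ (i : Fin d) (x : Fin d → Bool),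
      0 < p (Function.update x i true) + p (Function.update x i false)) :
    KLdiv p q ≤ C * (ratioMatch p q - ratioMatch p p) := by
  rw [ratioMatch_sub_ratioMatch_self p q fun i x => (hpmarg i x).ne']
  exact hAT2 p hp0 hp1 hpmarg

/-- Suppose `q > 0` on `{±1}^d` satisfies the strengthened approximate tensorization
inequality `D_KL(p,q) ≤ C Σ_i E_{X∼p}[TV²(p(X_i|X_{∼i}), q(X_i|X_{∼i}))]` for all `p`
(here `TV(μ,ν) = |μ(+1) − ν(+1)|` for distributions on `{±1}`). Then
`D_KL(p,q) ≤ C (M_p(q) − M_p(p))` for the ratio matching objective `M_p`. -/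
theorem strong_at_implies_ratio_matching_bound {d : ℕ}
    (q : (Fin d → Bool) → ℝ) (hq0 : ∀ x, 0 < q x)
    (hq1 : ∑ x : Fin d → Bool, q x = 1)
    (C : ℝ)
    (hAT2 : ∀ p : (Fin d → Bool) → ℝ, (∀ x, 0 ≤ p x) →
      (∑ x : Fin d → Bool, p x = 1) →
      (∀ (i : Fin d) (x : Fin d → Bool),
        0 < p (Function.update x i true) + p (Function.update x i false)) →
      KLdiv p q ≤ C * ∑ i : Fin d, ∑ x : Fin d → Bool,
        p x * (condTrue p i x - condTrue q i x) ^ 2)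
    (p : (Fin d → Bool) → ℝ) (hp0 : ∀ x, 0 ≤ p x)
    (hp1 : ∑ x : Fin d → Bool, p x = 1)
    (hpmarg : ∀ (i : Fin d) (x : Fin d → Bool),
      0 < p (Function.update x i true) + p (Function.update x i false)) :
    KLdiv p q ≤ C * (ratioMatch p q - ratioMatch p p) :=
  strong_at_implies_ratio_matching_bound_general q C hAT2 p hp0 hp1 hpmarg

end
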